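/- arXiv:1902.05595 — 3 statements merged into one kernel-verified Lean document; each statement's English description precedes it below -/
import Mathlib

section
/- Let n ≥ 1, set τ_n = 1 and fix τ_1,...,τ_{n-1} ∈ ℝ. For all sufficiently large t > 0, the equation Σ_{k=1}^{n} (-1)^{n-k} C(2k,k) τ_k t^{(k-n)/n} x^{2k} = 1 has a unique positive real solution x = ζ_0(t), and ζ_0(t) → C(2n,n)^{-1/(2n)} as t → ∞. -/
open Filter Set

noncomputable def Qf (c : ℕ → ℝ) (n : ℕ) (u : ℝ) : ℝ :=
  ∑ k ∈ Finset.Icc 1 n, c k * u ^ k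

noncomputable def Gf (c : ℕ → ℝ) (n : ℕ) (a t : ℝ) : ℝ :=
  ∑ k ∈ Finset.Icc 1 n, c k * a ^ k * t ^ (((k : ℝ) - (n : ℝ)) / (n : ℝ))

lemma Qf_cont (c : ℕ → ℝ) (n : ℕ) : Continuous (Qf c n) :=
  continuous_finset_sum _ fun k _ => continuous_const.mul (continuous_pow k)

lemma Gf_tendsto (c : ℕ → ℝ) {n : ℕ} (hn : 1 ≤ n) (a : ℝ) :
    Tendsto (fun t => Gf c n a t) atTop (nhds (c n * a ^ n)) := by
  have h : (c n * a ^ n) = ∑ k ∈ Finset.Icc 1 n, (if k = n then c n * a ^ n else 0) := by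
    rw [Finset.sum_ite_eq' (Finset.Icc 1 n) n (fun _ => c n * a ^ n)]
    simp [hn]
  rw [h]
  refine tendsto_finset_sum _ (fun k hk => ?_)
  rcases eq_or_ne k n with rfl | hkn
  · simp only [if_pos rfl, sub_self, zero_div, Real.rpow_zero, mul_one]
    exact tendsto_const_nhds
  · rw [if_neg hkn]
    have hk' : k < n := lt_of_le_of_ne (Finset.mem_Icc.mp hk).2 hkn
    have hnpos : (0:ℝ) < (n : ℝ) := by exact_mod_cast hn
    have hneg : (0:ℝ) < ((n : ℝ) - (k : ℝ)) / (n : ℝ) :=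
      div_pos (sub_pos.mpr (by exact_mod_cast hk')) hnpos
    have he : (((k:ℝ) - (n:ℝ)) / (n:ℝ)) = -(((n:ℝ) - (k:ℝ)) / (n:ℝ)) := by ring
    have := (tendsto_rpow_neg_atTop hneg).const_mul (c k * a ^ k)
    simp only [mul_zero] at this
    simp only [he]
    exact this

lemma Qf_eq (c : ℕ → ℝ) {n : ℕ} (hn : 1 ≤ n) {t : ℝ} (ht : 0 < t) (a : ℝ) :
    Qf c n (a * t ^ ((n:ℝ)⁻¹)) = t * Gf c n a t := by
  have hn0 : (n:ℝ) ≠ 0 := by positivity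
  unfold Qf Gf
  rw [Finset.mul_sum]
  refine Finset.sum_congr rfl (fun k hk => ?_)
  have h1 : (a * t ^ ((n:ℝ)⁻¹)) ^ k = a ^ k * t ^ ((n:ℝ)⁻¹ * k) := by
    rw [mul_pow, ← Real.rpow_natCast (t ^ ((n:ℝ)⁻¹)) k, ← Real.rpow_mul ht.le]
  have h2 : t * (c k * a ^ k * t ^ (((k:ℝ) - n) / n))
      = c k * a ^ k * (t ^ (1:ℝ) * t ^ (((k:ℝ) - n) / n)) := by
    rw [Real.rpow_one]; ring
  rw [h1, h2, ← Real.rpow_add ht]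
  have h3 : (n:ℝ)⁻¹ * k = 1 + ((k:ℝ) - n) / n := by field_simp; ring
  rw [h3]; ring

lemma exists_strictMono (c : ℕ → ℝ) {n : ℕ} (hn : 1 ≤ n) (hc : 0 < c n) :
    ∃ M : ℝ, 1 ≤ M ∧ StrictMonoOn (Qf c n) (Ici M) := by
  have hD : ∀ u : ℝ, HasDerivAt (Qf c n)
      (∑ k ∈ Finset.Icc 1 n, c k * ((k : ℝ) * u ^ (k - 1))) u := by
    intro u
    exact HasDerivAt.fun_sum (fun k _ => (hasDerivAt_pow k u).const_mul (c k))
  -- limit of normalized derivative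
  have key : Tendsto (fun u : ℝ => ∑ k ∈ Finset.Icc 1 n, c k * (k:ℝ) * (u⁻¹) ^ (n - k))
      atTop (nhds (c n * n)) := by
    have h : (c n * (n:ℝ)) = ∑ k ∈ Finset.Icc 1 n, (if k = n then c n * (n:ℝ) else 0) := by
      rw [Finset.sum_ite_eq' (Finset.Icc 1 n) n (fun _ => c n * (n:ℝ))]
      simp [hn]
    rw [h]
    refine tendsto_finset_sum _ (fun k hk => ?_)
    rcases eq_or_ne k n with rfl | hkn
    · simp only [if_pos rfl, Nat.sub_self, pow_zero, mul_one]
      exact tendsto_const_nhds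
    · rw [if_neg hkn]
      have hk' : k < n := lt_of_le_of_ne (Finset.mem_Icc.mp hk).2 hkn
      have : Tendsto (fun u : ℝ => (u⁻¹) ^ (n - k)) atTop (nhds 0) := by
        have h0 : Tendsto (fun u : ℝ => u⁻¹) atTop (nhds 0) := tendsto_inv_atTop_zero
        have := h0.pow (n - k)
        simpa [zero_pow (by omega : n - k ≠ 0)] using this
      have := this.const_mul (c k * (k:ℝ))
      simpa using this
  have hpos : ∀ᶠ u : ℝ in atTop,
      0 < ∑ k ∈ Finset.Icc 1 n, c k * (k:ℝ) * (u⁻¹) ^ (n - k) := by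
    refine key.eventually (eventually_gt_nhds ?_)
    have hn' : (0:ℝ) < n := by exact_mod_cast hn
    positivity
  obtain ⟨M₀, hM₀⟩ := (hpos.and (eventually_ge_atTop (1:ℝ))).exists_forall_of_atTop
  refine ⟨max M₀ 1, le_max_right _ _, ?_⟩
  refine strictMonoOn_of_deriv_pos (convex_Ici _) ((Qf_cont c n).continuousOn) ?_
  intro u hu
  rw [interior_Ici] at hu
  have hu1 : (1:ℝ) < u := lt_of_le_of_lt (le_max_right _ _) hu
  have hu0 : (0:ℝ) < u := lt_trans one_pos hu1
  obtain ⟨hH, -⟩ := hM₀ u (le_of_lt (lt_of_le_of_lt (le_max_left _ _) hu))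
  rw [(hD u).deriv]
  have heq : (∑ k ∈ Finset.Icc 1 n, c k * ((k : ℝ) * u ^ (k - 1)))
      = u ^ (n - 1) * ∑ k ∈ Finset.Icc 1 n, c k * (k:ℝ) * (u⁻¹) ^ (n - k) := by
    rw [Finset.mul_sum]
    refine Finset.sum_congr rfl (fun k hk => ?_)
    obtain ⟨hk1, hkn⟩ := Finset.mem_Icc.mp hk
    have hpow : u ^ (n - 1) = u ^ (k - 1) * u ^ (n - k) := by
      rw [← pow_add]; congr 1; omega
    rw [inv_pow, hpow]
    have : u ^ (n - k) ≠ 0 := by positivity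
    field_simp
  rw [heq]
  exact mul_pos (by positivity) hH

/-- For `n ≥ 1`, `τ_n = 1` and fixed `τ_1, ..., τ_{n-1} ∈ ℝ`, for all sufficiently large `t > 0`
the equation `∑_{k=1}^n (-1)^{n-k} C(2k,k) τ_k t^{(k-n)/n} x^{2k} = 1` has a unique positive
solution `x = ζ₀(t)`, and `ζ₀(t) → C(2n,n)^{-1/(2n)}` as `t → ∞`. -/
theorem branch_point_existence_and_limit (n : ℕ) (hn : 1 ≤ n) (τ : ℕ → ℝ) (hτ : τ n = 1) :
    ∃ ζ₀ : ℝ → ℝ,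
      (∀ᶠ t : ℝ in atTop,
        0 < ζ₀ t ∧
        (∑ k ∈ Finset.Icc 1 n, (-1 : ℝ) ^ (n - k) * (Nat.choose (2 * k) k : ℝ) * τ k *
            t ^ (((k : ℝ) - (n : ℝ)) / (n : ℝ)) * ζ₀ t ^ (2 * k)) = 1 ∧
        (∀ x : ℝ, 0 < x →
          (∑ k ∈ Finset.Icc 1 n, (-1 : ℝ) ^ (n - k) * (Nat.choose (2 * k) k : ℝ) * τ k *
              t ^ (((k : ℝ) - (n : ℝ)) / (n : ℝ)) * x ^ (2 * k)) = 1 → x = ζ₀ t)) ∧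
      Tendsto ζ₀ atTop
        (nhds ((Nat.choose (2 * n) n : ℝ) ^ (-(1 / (2 * (n : ℝ)))))) := by
  classical
  have hnR : (0:ℝ) < (n:ℝ) := by exact_mod_cast hn
  have hinv : (0:ℝ) < (n:ℝ)⁻¹ := by positivity
  set c : ℕ → ℝ := fun k => (-1 : ℝ) ^ (n - k) * (Nat.choose (2 * k) k : ℝ) * τ k with hc
  have hcn : c n = (Nat.choose (2 * n) n : ℝ) := by simp [hc, hτ]
  have hCpos : (0:ℝ) < (Nat.choose (2 * n) n : ℝ) := by
    exact_mod_cast Nat.choose_pos (by omega : n ≤ 2 * n)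
  have hcpos : 0 < c n := by rw [hcn]; exact hCpos
  obtain ⟨M, hM1, hQmono⟩ := exists_strictMono c hn hcpos
  obtain ⟨B, hB⟩ : ∃ B, ∀ u ∈ Icc (0:ℝ) M, Qf c n u ≤ B := by
    obtain ⟨z, _, hz⟩ := isCompact_Icc.exists_isMaxOn (nonempty_Icc.mpr (by linarith : (0:ℝ) ≤ M))
      (Qf_cont c n).continuousOn
    exact ⟨Qf c n z, fun u hu => hz hu⟩
  have hsum : ∀ t x : ℝ,
      (∑ k ∈ Finset.Icc 1 n, (-1 : ℝ) ^ (n - k) * (Nat.choose (2 * k) k : ℝ) * τ k *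
          t ^ (((k : ℝ) - (n : ℝ)) / (n : ℝ)) * x ^ (2 * k)) = Gf c n (x ^ 2) t := by
    intro t x
    refine Finset.sum_congr rfl (fun k _ => ?_)
    simp only [hc]
    ring
  -- any positive solution gives a point ≥ M where Qf equals t
  have hsol : ∀ t : ℝ, 0 < t → B < t → ∀ y : ℝ, 0 < y → Gf c n (y ^ 2) t = 1 →
      M ≤ y ^ 2 * t ^ ((n:ℝ)⁻¹) ∧ Qf c n (y ^ 2 * t ^ ((n:ℝ)⁻¹)) = t := by
    intro t ht htB y hy hG
    have hQ : Qf c n (y ^ 2 * t ^ ((n:ℝ)⁻¹)) = t := by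
      rw [Qf_eq c hn ht, hG, mul_one]
    refine ⟨?_, hQ⟩
    by_contra hlt
    push_neg at hlt
    have htn : (0:ℝ) < t ^ ((n:ℝ)⁻¹) := Real.rpow_pos_of_pos ht _
    have hmem : y ^ 2 * t ^ ((n:ℝ)⁻¹) ∈ Icc (0:ℝ) M := ⟨by positivity, hlt.le⟩
    have := hB _ hmem
    rw [hQ] at this; linarith
  -- parameters for existence
  set a₀ : ℝ := max 1 (2 / c n) with ha₀def
  have ha₀1 : (1:ℝ) ≤ a₀ := le_max_left _ _
  have ha₀ : 1 < c n * a₀ ^ n := by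
    have h1 : a₀ ≤ a₀ ^ n := le_self_pow₀ ha₀1 (by omega)
    have h2 : 2 / c n ≤ a₀ := le_max_right _ _
    have h3 : 2 ≤ c n * a₀ := by
      rw [div_le_iff₀ hcpos] at h2; linarith [h2]
    nlinarith
  have hE1 : ∀ᶠ t : ℝ in atTop, 0 < t := eventually_gt_atTop 0
  have hE2 : ∀ᶠ t : ℝ in atTop, B < t := eventually_gt_atTop B
  have hE3 : ∀ᶠ t : ℝ in atTop, M ≤ t ^ ((n:ℝ)⁻¹) :=
    (tendsto_rpow_atTop hinv).eventually_ge_atTop M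
  have hE4 : ∀ᶠ t : ℝ in atTop, 1 < Gf c n a₀ t :=
    (Gf_tendsto c hn a₀).eventually (eventually_gt_nhds ha₀)
  have hEx : ∀ᶠ t : ℝ in atTop, ∃ x, (0 < x ∧ Gf c n (x ^ 2) t = 1) ∧
      ∀ y, 0 < y → Gf c n (y ^ 2) t = 1 → y = x := by
    filter_upwards [hE1, hE2, hE3, hE4] with t ht htB htM htG
    have htn : (0:ℝ) < t ^ ((n:ℝ)⁻¹) := Real.rpow_pos_of_pos ht _
    have hMa : M ≤ a₀ * t ^ ((n:ℝ)⁻¹) :=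
      le_trans htM (le_mul_of_one_le_left htn.le ha₀1)
    have hQM : Qf c n M ≤ B := hB M ⟨by linarith, le_rfl⟩
    have hQa : t < Qf c n (a₀ * t ^ ((n:ℝ)⁻¹)) := by
      rw [Qf_eq c hn ht]; nlinarith
    obtain ⟨u, humem, hu⟩ := intermediate_value_Icc hMa (Qf_cont c n).continuousOn
      ⟨by linarith, hQa.le⟩
    have huM : M ≤ u := humem.1
    have hupos : 0 < u := lt_of_lt_of_le (by linarith) huM
    set x := Real.sqrt (u / t ^ ((n:ℝ)⁻¹)) with hxdef
    have hxpos : 0 < x := Real.sqrt_pos.mpr (div_pos hupos htn)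
    have hx2 : x ^ 2 = u / t ^ ((n:ℝ)⁻¹) := Real.sq_sqrt (div_pos hupos htn).le
    have hxu : x ^ 2 * t ^ ((n:ℝ)⁻¹) = u := by
      rw [hx2]; field_simp
    have hGx : Gf c n (x ^ 2) t = 1 := by
      have h := Qf_eq c hn ht (x ^ 2)
      rw [hxu, hu] at h
      have h1 : t * 1 = t * Gf c n (x ^ 2) t := by rw [mul_one]; exact h
      exact (mul_left_cancel₀ (ne_of_gt ht) h1).symm
    refine ⟨x, ⟨hxpos, hGx⟩, ?_⟩
    intro y hy hGy
    obtain ⟨hyM, hyQ⟩ := hsol t ht htB y hy hGy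
    obtain ⟨hxM, hxQ⟩ := hsol t ht htB x hxpos hGx
    have heq : y ^ 2 * t ^ ((n:ℝ)⁻¹) = x ^ 2 * t ^ ((n:ℝ)⁻¹) :=
      hQmono.injOn (mem_Ici.mpr hyM) (mem_Ici.mpr hxM) (hyQ.trans hxQ.symm)
    have hy2 : y ^ 2 = x ^ 2 := mul_right_cancel₀ (ne_of_gt htn) heq
    have hfac : (y - x) * (y + x) = 0 := by linear_combination hy2
    rcases mul_eq_zero.mp hfac with h | h
    · linarith
    · linarith
  set ζ : ℝ → ℝ := fun t =>
    if h : ∃ x, 0 < x ∧ Gf c n (x ^ 2) t = 1 then h.choose else 1 with hζdef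
  have hζspec : ∀ᶠ t : ℝ in atTop, (0 < ζ t ∧ Gf c n ((ζ t) ^ 2) t = 1) ∧
      ∀ y, 0 < y → Gf c n (y ^ 2) t = 1 → y = ζ t := by
    filter_upwards [hEx] with t ht
    obtain ⟨x, hx, huniq⟩ := ht
    have hne : ∃ x, 0 < x ∧ Gf c n (x ^ 2) t = 1 := ⟨x, hx⟩
    have hch : ζ t = hne.choose := by rw [hζdef]; simp only [dif_pos hne]
    have hspec := hne.choose_spec
    rw [hch]
    exact ⟨hspec, fun y hy hGy =>
      (huniq y hy hGy).trans ((huniq _ hspec.1 hspec.2).symm)⟩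
  refine ⟨ζ, ?_, ?_⟩
  · filter_upwards [hζspec] with t ht
    obtain ⟨⟨hpos, hGe⟩, huniq⟩ := ht
    refine ⟨hpos, ?_, ?_⟩
    · rw [hsum t (ζ t)]; exact hGe
    · intro x hx hxe
      exact huniq x hx (by rw [← hsum t x]; exact hxe)
  · set L : ℝ := (Nat.choose (2 * n) n : ℝ) ^ (-(1 / (2 * (n:ℝ)))) with hLdef
    have hL : 0 < L := Real.rpow_pos_of_pos hCpos _
    have hLkey : c n * (L ^ 2) ^ n = 1 := by
      rw [hcn, ← pow_mul, hLdef, ← Real.rpow_natCast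
        ((Nat.choose (2 * n) n : ℝ) ^ (-(1 / (2 * (n:ℝ))))) (2 * n),
        ← Real.rpow_mul hCpos.le]
      have he : (-(1 / (2 * (n:ℝ)))) * ((2 * n : ℕ) : ℝ) = -1 := by
        push_cast; field_simp
      rw [he, Real.rpow_neg_one]
      exact mul_inv_cancel₀ (ne_of_gt hCpos)
    refine tendsto_order.2 ⟨?_, ?_⟩
    · intro b hb
      rcases le_or_gt b 0 with hb0 | hb0
      · filter_upwards [hζspec] with t ht
        exact lt_of_le_of_lt hb0 ht.1.1
      · have hkey : c n * (b ^ 2) ^ n < 1 := by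
          rw [← hLkey]
          have hlt : b ^ (2 * n) < L ^ (2 * n) :=
            pow_lt_pow_left₀ hb hb0.le (by omega)
          rw [pow_mul, pow_mul] at hlt
          exact mul_lt_mul_of_pos_left hlt hcpos
        have hGb := (Gf_tendsto c hn (b ^ 2)).eventually (eventually_lt_nhds hkey)
        have hMb : ∀ᶠ t : ℝ in atTop, M ≤ b ^ 2 * t ^ ((n:ℝ)⁻¹) :=
          (Tendsto.const_mul_atTop (by positivity) (tendsto_rpow_atTop hinv)).eventually_ge_atTop M
        filter_upwards [hζspec, hGb, hMb, hE1, hE2] with t ht hG hMb' ht0 htB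
        obtain ⟨⟨hζpos, hζG⟩, -⟩ := ht
        obtain ⟨hζM, hζQ⟩ := hsol t ht0 htB _ hζpos hζG
        have htn : (0:ℝ) < t ^ ((n:ℝ)⁻¹) := Real.rpow_pos_of_pos ht0 _
        have hQb : Qf c n (b ^ 2 * t ^ ((n:ℝ)⁻¹)) < t := by
          rw [Qf_eq c hn ht0]; nlinarith
        by_contra hcon
        push_neg at hcon
        have h2 : (ζ t) ^ 2 ≤ b ^ 2 := pow_le_pow_left₀ hζpos.le hcon 2
        have h3 : (ζ t) ^ 2 * t ^ ((n:ℝ)⁻¹) ≤ b ^ 2 * t ^ ((n:ℝ)⁻¹) :=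
          mul_le_mul_of_nonneg_right h2 htn.le
        have h4 : Qf c n ((ζ t) ^ 2 * t ^ ((n:ℝ)⁻¹)) ≤ Qf c n (b ^ 2 * t ^ ((n:ℝ)⁻¹)) :=
          hQmono.monotoneOn (mem_Ici.mpr hζM) (mem_Ici.mpr hMb') h3
        rw [hζQ] at h4; linarith
    · intro b hb
      have hb0 : 0 < b := lt_trans hL hb
      have hkey : 1 < c n * (b ^ 2) ^ n := by
        rw [← hLkey]
        have hlt : L ^ (2 * n) < b ^ (2 * n) :=
          pow_lt_pow_left₀ hb hL.le (by omega)
        rw [pow_mul, pow_mul] at hlt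
        exact mul_lt_mul_of_pos_left hlt hcpos
      have hGb := (Gf_tendsto c hn (b ^ 2)).eventually (eventually_gt_nhds hkey)
      have hMb : ∀ᶠ t : ℝ in atTop, M ≤ b ^ 2 * t ^ ((n:ℝ)⁻¹) :=
        (Tendsto.const_mul_atTop (by positivity) (tendsto_rpow_atTop hinv)).eventually_ge_atTop M
      filter_upwards [hζspec, hGb, hMb, hE1, hE2] with t ht hG hMb' ht0 htB
      obtain ⟨⟨hζpos, hζG⟩, -⟩ := ht
      obtain ⟨hζM, hζQ⟩ := hsol t ht0 htB _ hζpos hζG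
      have htn : (0:ℝ) < t ^ ((n:ℝ)⁻¹) := Real.rpow_pos_of_pos ht0 _
      have hQb : t < Qf c n (b ^ 2 * t ^ ((n:ℝ)⁻¹)) := by
        rw [Qf_eq c hn ht0]; nlinarith
      by_contra hcon
      push_neg at hcon
      have h2 : b ^ 2 ≤ (ζ t) ^ 2 := pow_le_pow_left₀ hb0.le hcon 2
      have h3 : b ^ 2 * t ^ ((n:ℝ)⁻¹) ≤ (ζ t) ^ 2 * t ^ ((n:ℝ)⁻¹) :=
        mul_le_mul_of_nonneg_right h2 htn.le
      have h4 : Qf c n (b ^ 2 * t ^ ((n:ℝ)⁻¹)) ≤ Qf c n ((ζ t) ^ 2 * t ^ ((n:ℝ)⁻¹)) :=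
        hQmono.monotoneOn (mem_Ici.mpr hMb') (mem_Ici.mpr hζM) h3
      rw [hζQ] at h4; linarith
end

section
/- For z ∈ (0,1) and every integer n ≥ 1, Σ_{j=1}^{n} (-1)^j z^{j+1/2} / (Γ(j+3/2)(n-j)!) < 0. -/
open intervalIntegral

noncomputable def bb (j : ℕ) : ℝ :=
  4 ^ j * (j.factorial : ℝ) * (j.factorial : ℝ) / ((2 * j + 1).factorial : ℝ)

lemma bb_pos (j : ℕ) : 0 < bb j := by unfold bb; positivity

lemma gamma_formula (j : ℕ) :
    Real.Gamma ((j : ℝ) + 3 / 2) =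
      ((2 * j + 1).factorial : ℝ) * Real.sqrt Real.pi / (2 * 4 ^ j * (j.factorial : ℝ)) := by
  induction j with
  | zero =>
      have h : ((0 : ℕ) : ℝ) + 3 / 2 = 1 / 2 + 1 := by norm_num
      rw [h, Real.Gamma_add_one (by norm_num), Real.Gamma_one_half_eq]
      norm_num
      ring
  | succ k ih =>
      have h : ((k + 1 : ℕ) : ℝ) + 3 / 2 = ((k : ℝ) + 3 / 2) + 1 := by push_cast; ring
      have hne : ((k : ℝ) + 3 / 2) ≠ 0 := by positivity
      rw [h, Real.Gamma_add_one hne, ih]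
      have h1 : (2 * (k + 1) + 1).factorial = (2 * k + 3) * ((2 * k + 2) * (2 * k + 1).factorial) := by
        have : 2 * (k + 1) + 1 = (2 * k + 2) + 1 := by ring
        rw [this, Nat.factorial_succ, Nat.factorial_succ]
      have h2 : (k + 1).factorial = (k + 1) * k.factorial := Nat.factorial_succ k
      rw [h1, h2]
      push_cast
      have hk : (0:ℝ) < (k.factorial : ℝ) := by positivity
      have hf : (0:ℝ) < ((2 * k + 1).factorial : ℝ) := by positivity
      field_simp
      ring

lemma wallis (j : ℕ) :
    ∫ t in (0:ℝ)..1, (1 - t ^ 2) ^ j = bb j := by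
  induction j with
  | zero => simp [bb]
  | succ k ih =>
      have hderiv : ∀ t ∈ Set.uIcc (0:ℝ) 1,
          HasDerivAt (fun t : ℝ => t * (1 - t ^ 2) ^ (k + 1))
            ((2 * (k:ℝ) + 3) * (1 - t ^ 2) ^ (k + 1) - (2 * (k:ℝ) + 2) * (1 - t ^ 2) ^ k) t := by
        intro t _
        have hu : HasDerivAt (fun t : ℝ => 1 - t ^ 2) (-(2 * t)) t := by
          simpa using (hasDerivAt_pow 2 t).const_sub 1
        have h1 : HasDerivAt (fun t : ℝ => t * (1 - t ^ 2) ^ (k + 1))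
            (1 * (1 - t ^ 2) ^ (k + 1) + id t * (((k + 1 : ℕ) : ℝ) * (1 - t ^ 2) ^ (k + 1 - 1) * -(2 * t))) t :=
          (hasDerivAt_id t).mul (hu.pow (k + 1))
        convert h1 using 1
        simp only [Nat.add_sub_cancel, id_eq]
        push_cast
        rw [pow_succ, pow_succ]
        ring
      have hint : IntervalIntegrable
          (fun t : ℝ => (2 * (k:ℝ) + 3) * (1 - t ^ 2) ^ (k + 1) - (2 * (k:ℝ) + 2) * (1 - t ^ 2) ^ k)
          MeasureTheory.volume 0 1 := by
        apply Continuous.intervalIntegrable; continuity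
      have heq := integral_eq_sub_of_hasDerivAt hderiv hint
      norm_num at heq
      have hsplit : (∫ t in (0:ℝ)..1,
          ((2 * (k:ℝ) + 3) * (1 - t ^ 2) ^ (k + 1) - (2 * (k:ℝ) + 2) * (1 - t ^ 2) ^ k))
          = (2 * (k:ℝ) + 3) * (∫ t in (0:ℝ)..1, (1 - t ^ 2) ^ (k + 1))
            - (2 * (k:ℝ) + 2) * ∫ t in (0:ℝ)..1, (1 - t ^ 2) ^ k := by
        rw [integral_sub, integral_const_mul, integral_const_mul]
        · apply Continuous.intervalIntegrable; continuity
        · apply Continuous.intervalIntegrable; continuity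
      rw [hsplit, ih] at heq
      have h23 : (0:ℝ) < 2 * (k:ℝ) + 3 := by positivity
      have : ∫ t in (0:ℝ)..1, (1 - t ^ 2) ^ (k + 1) = (2 * (k:ℝ) + 2) * bb k / (2 * (k:ℝ) + 3) := by
        field_simp at heq ⊢
        linarith
      rw [this]
      unfold bb
      have h1 : (2 * (k + 1) + 1).factorial = (2 * k + 3) * ((2 * k + 2) * (2 * k + 1).factorial) := by
        have : 2 * (k + 1) + 1 = (2 * k + 2) + 1 := by ring
        rw [this, Nat.factorial_succ, Nat.factorial_succ]
      have h2 : (k + 1).factorial = (k + 1) * k.factorial := Nat.factorial_succ k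
      rw [h1, h2]
      push_cast
      have hk : (0:ℝ) < (k.factorial : ℝ) := by positivity
      have hf : (0:ℝ) < ((2 * k + 1).factorial : ℝ) := by positivity
      field_simp
      ring

lemma key_integral (n : ℕ) (z : ℝ) :
    ∫ t in (0:ℝ)..1, (1 - z * (1 - t ^ 2)) ^ n
      = ∑ j ∈ Finset.range (n + 1), ((n.choose j : ℝ) * (-z) ^ j) * bb j := by
  have hexp : ∀ t : ℝ, (1 - z * (1 - t ^ 2)) ^ n
      = ∑ j ∈ Finset.range (n + 1), ((n.choose j : ℝ) * (-z) ^ j) * (1 - t ^ 2) ^ j := by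
    intro t
    have h : (1 : ℝ) - z * (1 - t ^ 2) = -(z * (1 - t ^ 2)) + 1 := by ring
    rw [h, add_pow]
    refine Finset.sum_congr rfl fun j hj => ?_
    rw [neg_mul_eq_neg_mul, mul_pow, one_pow]
    ring
  simp_rw [hexp]
  rw [intervalIntegral.integral_finset_sum]
  · refine Finset.sum_congr rfl fun j hj => ?_
    rw [intervalIntegral.integral_const_mul, wallis]
  · intro j hj
    apply Continuous.intervalIntegrable
    continuity

lemma sum_lt_one (n : ℕ) (hn : 1 ≤ n) (z : ℝ) (h0 : 0 < z) (h1 : z < 1) :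
    ∑ j ∈ Finset.range (n + 1), ((n.choose j : ℝ) * (-z) ^ j) * bb j < 1 := by
  rw [← key_integral]
  have hlt : (∫ t in (0:ℝ)..1, (1 - (1 - z * (1 - t ^ 2)) ^ n)) > 0 := by
    apply intervalIntegral.intervalIntegral_pos_of_pos_on
    · apply Continuous.intervalIntegrable; continuity
    · intro t ht
      have ht2 : t ^ 2 < 1 := by
        have := ht.1; have := ht.2; nlinarith
      have hb0 : (0:ℝ) ≤ 1 - z * (1 - t ^ 2) := by nlinarith
      have hb1 : 1 - z * (1 - t ^ 2) < 1 := by nlinarith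
      have := pow_lt_one₀ hb0 hb1 (by omega : n ≠ 0)
      linarith
    · norm_num
  have hsub : (∫ t in (0:ℝ)..1, (1 - (1 - z * (1 - t ^ 2)) ^ n))
      = 1 - ∫ t in (0:ℝ)..1, (1 - z * (1 - t ^ 2)) ^ n := by
    rw [intervalIntegral.integral_sub]
    · simp
    · apply Continuous.intervalIntegrable; continuity
    · apply Continuous.intervalIntegrable; continuity
  rw [hsub] at hlt
  linarith

/-- For `z ∈ (0,1)` and `n ≥ 1`, `∑_{j=1}^n (-1)^j z^{j+1/2} / (Γ(j+3/2)(n-j)!) < 0`. -/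
theorem alternating_gamma_sum_neg (n : ℕ) (hn : 1 ≤ n) (z : ℝ) (h0 : 0 < z) (h1 : z < 1) :
    ∑ j ∈ Finset.Icc 1 n, (-1 : ℝ) ^ j * z ^ ((j : ℝ) + 1 / 2) /
      (Real.Gamma ((j : ℝ) + 3 / 2) * ((n - j).factorial : ℝ)) < 0 := by
  have key := sum_lt_one n hn z h0 h1
  have hsplit : Finset.range (n + 1) = insert 0 (Finset.Icc 1 n) := by
    ext x; simp only [Finset.mem_range, Finset.mem_insert, Finset.mem_Icc]; omega
  rw [hsplit, Finset.sum_insert (by simp)] at key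
  have hb0 : bb 0 = 1 := by simp [bb]
  rw [hb0] at key
  simp only [pow_zero, Nat.choose_zero_right, Nat.cast_one, one_mul, mul_one] at key
  have hsum_neg : ∑ j ∈ Finset.Icc 1 n, ((n.choose j : ℝ) * (-z) ^ j) * bb j < 0 := by
    linarith
  have hc : (0:ℝ) < 2 * Real.sqrt z / (Real.sqrt Real.pi * (n.factorial : ℝ)) := by
    have h1 : 0 < Real.sqrt z := Real.sqrt_pos.mpr h0
    have h2 : 0 < Real.sqrt Real.pi := Real.sqrt_pos.mpr Real.pi_pos
    have h3 : (0:ℝ) < (n.factorial : ℝ) := by positivity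
    positivity
  have hterm : ∀ j ∈ Finset.Icc 1 n,
      (-1 : ℝ) ^ j * z ^ ((j : ℝ) + 1 / 2) /
        (Real.Gamma ((j : ℝ) + 3 / 2) * ((n - j).factorial : ℝ))
      = (2 * Real.sqrt z / (Real.sqrt Real.pi * (n.factorial : ℝ)))
          * (((n.choose j : ℝ) * (-z) ^ j) * bb j) := by
    intro j hj
    obtain ⟨hj1, hjn⟩ := Finset.mem_Icc.mp hj
    rw [gamma_formula]
    have hz : z ^ ((j : ℝ) + 1 / 2) = z ^ j * Real.sqrt z := by
      rw [Real.rpow_add h0, Real.rpow_natCast, ← Real.sqrt_eq_rpow]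
    rw [hz]
    have hch : (n.choose j : ℝ) = (n.factorial : ℝ) / ((j.factorial : ℝ) * ((n - j).factorial : ℝ)) := by
      have := Nat.choose_mul_factorial_mul_factorial hjn
      have hcast : (n.choose j : ℝ) * (j.factorial : ℝ) * ((n - j).factorial : ℝ) = (n.factorial : ℝ) := by
        exact_mod_cast congrArg (Nat.cast : ℕ → ℝ) this
      field_simp
      linarith [hcast]
    rw [hch, neg_pow z j]
    unfold bb
    have p1 : (0:ℝ) < (j.factorial : ℝ) := by positivity
    have p2 : (0:ℝ) < ((n - j).factorial : ℝ) := by positivity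
    have p3 : (0:ℝ) < ((2 * j + 1).factorial : ℝ) := by positivity
    have p4 : (0:ℝ) < (n.factorial : ℝ) := by positivity
    have p5 : (0:ℝ) < Real.sqrt Real.pi := Real.sqrt_pos.mpr Real.pi_pos
    have p6 : (0:ℝ) < (4:ℝ) ^ j := by positivity
    field_simp
  rw [Finset.sum_congr rfl hterm, ← Finset.mul_sum]
  exact mul_neg_of_pos_of_neg hc hsum_neg
end

section
/- Let c_{n-m} = Σ_{k=0}^{m} (-1)^{m-k} 2^{2(n-m+k)-1} τ_{n-m+k} t^{-(m-k)/n} Γ(n-m+k+1/2)/(k! Γ(n-m+3/2)) ζ^{2k} for m = 0,...,n-1 with τ_n = 1. Then these c_j solve the triangular linear system Σ_{ℓ=0}^{n-j} c_{j+ℓ} (-1)^ℓ Γ(j+ℓ+3/2)/(ℓ! Γ(j+3/2)) ζ^{2ℓ} = (-1)^{n+j} 2^{2j} τ_j t^{-1+j/n}/(2j+1) for j = 1,...,n. -/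
lemma alt_sum_fact_zero {s : ℕ} (hs : s ≠ 0) :
    ∑ ℓ ∈ Finset.range (s + 1),
      (-1 : ℝ) ^ ℓ / ((ℓ.factorial : ℝ) * ((s - ℓ).factorial : ℝ)) = 0 := by
  have h : (∑ ℓ ∈ Finset.range (s + 1), ((-1 : ℝ) ^ ℓ * (s.choose ℓ : ℝ))) = 0 := by
    have := Int.alternating_sum_range_choose_of_ne hs
    exact_mod_cast congrArg (Int.cast : ℤ → ℝ) this
  have hsum : ∑ ℓ ∈ Finset.range (s + 1),
      (-1 : ℝ) ^ ℓ / ((ℓ.factorial : ℝ) * ((s - ℓ).factorial : ℝ)) =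
      (∑ ℓ ∈ Finset.range (s + 1), ((-1 : ℝ) ^ ℓ * (s.choose ℓ : ℝ))) / (s.factorial : ℝ) := by
    rw [Finset.sum_div]
    refine Finset.sum_congr rfl fun ℓ hℓ => ?_
    rw [Finset.mem_range] at hℓ
    have hle : ℓ ≤ s := by omega
    have key : ((s.choose ℓ : ℝ)) * (ℓ.factorial : ℝ) * ((s - ℓ).factorial : ℝ)
        = (s.factorial : ℝ) := by
      exact_mod_cast Nat.choose_mul_factorial_mul_factorial hle
    have h1 : (ℓ.factorial : ℝ) ≠ 0 := Nat.cast_ne_zero.mpr ℓ.factorial_ne_zero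
    have h2 : ((s - ℓ).factorial : ℝ) ≠ 0 := Nat.cast_ne_zero.mpr (s - ℓ).factorial_ne_zero
    have h3 : (s.factorial : ℝ) ≠ 0 := Nat.cast_ne_zero.mpr s.factorial_ne_zero
    field_simp
    rw [← key]; ring
  rw [hsum, h, zero_div]

/-- The coefficients
`c_{n-m} = ∑_{k=0}^m (-1)^{m-k} 2^{2(n-m+k)-1} τ_{n-m+k} t^{-(m-k)/n} Γ(n-m+k+1/2)/(k! Γ(n-m+3/2)) ζ^{2k}`
solve the triangular linear system
`∑_{ℓ=0}^{n-j} c_{j+ℓ} (-1)^ℓ Γ(j+ℓ+3/2)/(ℓ! Γ(j+3/2)) ζ^{2ℓ} = (-1)^{n+j} 2^{2j} τ_j t^{-1+j/n}/(2j+1)`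
for `j = 1, ..., n`. -/
theorem g_function_coefficients_solve_system (n : ℕ) (hn : 1 ≤ n) (τ : ℕ → ℝ) (hτ : τ n = 1)
    (t ζ : ℝ) (ht : 0 < t) (c : ℕ → ℝ)
    (hc : ∀ m : ℕ, m < n → c (n - m) =
      ∑ k ∈ Finset.range (m + 1),
        (-1 : ℝ) ^ (m - k) * 2 ^ (2 * (n - m + k) - 1) * τ (n - m + k) *
          t ^ (-(((m : ℝ) - (k : ℝ)) / (n : ℝ))) *
          (Real.Gamma ((n : ℝ) - (m : ℝ) + (k : ℝ) + 1 / 2) /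
            ((k.factorial : ℝ) * Real.Gamma ((n : ℝ) - (m : ℝ) + 3 / 2))) * ζ ^ (2 * k)) :
    ∀ j ∈ Finset.Icc 1 n,
      ∑ ℓ ∈ Finset.range (n - j + 1),
        c (j + ℓ) * (-1 : ℝ) ^ ℓ *
          (Real.Gamma ((j : ℝ) + (ℓ : ℝ) + 3 / 2) /
            ((ℓ.factorial : ℝ) * Real.Gamma ((j : ℝ) + 3 / 2))) * ζ ^ (2 * ℓ) =
      (-1 : ℝ) ^ (n + j) * 2 ^ (2 * j) * τ j * t ^ ((-1 : ℝ) + (j : ℝ) / (n : ℝ)) /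
        (2 * (j : ℝ) + 1) := by
  intro j hj
  rw [Finset.mem_Icc] at hj
  obtain ⟨hj1, hjn⟩ := hj
  have hn0 : (n : ℝ) ≠ 0 := Nat.cast_ne_zero.mpr (by omega)
  set N := n - j with hNdef
  have hNj : N + j = n := by omega
  have hNr : (N : ℝ) + (j : ℝ) = (n : ℝ) := by exact_mod_cast congrArg (Nat.cast : ℕ → ℝ) hNj
  set g : ℕ → ℝ := fun s =>
    (-1 : ℝ) ^ (N - s) * 2 ^ (2 * (j + s) - 1) * τ (j + s) *
      t ^ (-(((N : ℝ) - (s : ℝ)) / (n : ℝ))) *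
      (Real.Gamma ((j : ℝ) + (s : ℝ) + 1 / 2) / Real.Gamma ((j : ℝ) + 3 / 2)) *
      ζ ^ (2 * s) with hg
  have hΓ3 : (0 : ℝ) < Real.Gamma ((j : ℝ) + 3 / 2) := Real.Gamma_pos_of_pos (by positivity)
  have step1 : ∑ ℓ ∈ Finset.range (n - j + 1),
        c (j + ℓ) * (-1 : ℝ) ^ ℓ *
          (Real.Gamma ((j : ℝ) + (ℓ : ℝ) + 3 / 2) /
            ((ℓ.factorial : ℝ) * Real.Gamma ((j : ℝ) + 3 / 2))) * ζ ^ (2 * ℓ) =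
      ∑ ℓ ∈ Finset.range (N + 1), ∑ k ∈ Finset.range (N + 1 - ℓ),
        g (ℓ + k) * ((-1 : ℝ) ^ ℓ / ((ℓ.factorial : ℝ) * (k.factorial : ℝ))) := by
    refine Finset.sum_congr rfl fun ℓ hℓ => ?_
    rw [Finset.mem_range] at hℓ
    have hℓN : ℓ ≤ N := by omega
    have hcℓ := hc (N - ℓ) (by omega)
    rw [show n - (N - ℓ) = j + ℓ by omega] at hcℓ
    rw [hcℓ, Finset.sum_mul, Finset.sum_mul, Finset.sum_mul,
      show N - ℓ + 1 = N + 1 - ℓ by omega]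
    refine Finset.sum_congr rfl fun k hk => ?_
    rw [Finset.mem_range] at hk
    have hkN : k ≤ N - ℓ := by omega
    have hcast : ((N - ℓ : ℕ) : ℝ) = (N : ℝ) - (ℓ : ℝ) := Nat.cast_sub hℓN
    have hΓ2 : (0 : ℝ) < Real.Gamma ((j : ℝ) + (ℓ : ℝ) + 3 / 2) :=
      Real.Gamma_pos_of_pos (by positivity)
    have hf1 : (ℓ.factorial : ℝ) ≠ 0 := Nat.cast_ne_zero.mpr ℓ.factorial_ne_zero
    have hf2 : (k.factorial : ℝ) ≠ 0 := Nat.cast_ne_zero.mpr k.factorial_ne_zero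
    simp only [hg]
    rw [show N - ℓ - k = N - (ℓ + k) by omega,
      show (n : ℝ) - ((N - ℓ : ℕ) : ℝ) + (k : ℝ) + 1 / 2
          = (j : ℝ) + ((ℓ + k : ℕ) : ℝ) + 1 / 2 by push_cast [hcast]; linarith,
      show (n : ℝ) - ((N - ℓ : ℕ) : ℝ) + 3 / 2 = (j : ℝ) + (ℓ : ℝ) + 3 / 2 by
        rw [hcast]; linarith,
      show -((((N - ℓ : ℕ) : ℝ) - (k : ℝ)) / (n : ℝ))
          = -(((N : ℝ) - ((ℓ + k : ℕ) : ℝ)) / (n : ℝ)) by push_cast [hcast]; ring,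
      show 2 * (j + (ℓ + k)) - 1 = 2 * (j + ℓ + k) - 1 by omega,
      show j + (ℓ + k) = j + ℓ + k from by omega,
      show 2 * (ℓ + k) = 2 * k + 2 * ℓ by ring, pow_add]
    field_simp
  rw [step1, ← Finset.sum_range_diag_flip (N + 1)
    (fun ℓ k => g (ℓ + k) * ((-1 : ℝ) ^ ℓ / ((ℓ.factorial : ℝ) * (k.factorial : ℝ))))]
  have step3 : ∑ s ∈ Finset.range (N + 1), ∑ ℓ ∈ Finset.range (s + 1),
      g (ℓ + (s - ℓ)) * ((-1 : ℝ) ^ ℓ / ((ℓ.factorial : ℝ) * ((s - ℓ).factorial : ℝ)))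
      = g 0 := by
    rw [Finset.sum_eq_single_of_mem 0 (by simp)]
    · simp
    · intro s _ hs0
      have hcong : ∀ ℓ ∈ Finset.range (s + 1),
          g (ℓ + (s - ℓ)) * ((-1 : ℝ) ^ ℓ / ((ℓ.factorial : ℝ) * ((s - ℓ).factorial : ℝ)))
          = g s * ((-1 : ℝ) ^ ℓ / ((ℓ.factorial : ℝ) * ((s - ℓ).factorial : ℝ))) := by
        intro ℓ hℓ
        rw [Finset.mem_range] at hℓ
        rw [show ℓ + (s - ℓ) = s by omega]
      rw [Finset.sum_congr rfl hcong, ← Finset.mul_sum, alt_sum_fact_zero hs0, mul_zero]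
  rw [step3, hg]
  simp only [Nat.sub_zero, Nat.add_zero, Nat.cast_zero, mul_zero, pow_zero, mul_one, sub_zero]
  have hΓadd : Real.Gamma ((j : ℝ) + 3 / 2) = ((j : ℝ) + 1 / 2) * Real.Gamma ((j : ℝ) + 1 / 2) := by
    rw [show (j : ℝ) + 3 / 2 = ((j : ℝ) + 1 / 2) + 1 by ring,
      Real.Gamma_add_one (by positivity)]
  have hΓ1 : (0 : ℝ) < Real.Gamma ((j : ℝ) + 1 / 2) := Real.Gamma_pos_of_pos (by positivity)
  have hsgn : (-1 : ℝ) ^ (n + j) = (-1 : ℝ) ^ N := by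
    rw [show n + j = N + 2 * j by omega, pow_add, pow_mul]
    norm_num
  have hexp : -((N : ℝ) / (n : ℝ)) = (-1 : ℝ) + (j : ℝ) / (n : ℝ) := by
    rw [show (N : ℝ) = (n : ℝ) - (j : ℝ) by linarith]
    field_simp
    ring
  have h2 : (2 : ℝ) ^ (2 * j) = 2 * 2 ^ (2 * j - 1) := by
    rw [← pow_succ']
    congr 1
    omega
  rw [hsgn, hexp, hΓadd, h2]
  have hq : (j : ℝ) + 1 / 2 ≠ 0 := by positivity
  have h2j : (2 : ℝ) * (j : ℝ) + 1 ≠ 0 := by positivity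
  field_simp
  ring
end
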